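/- (Divergence forcing a common Gaussian parameter) Let P₁ and P₂ be polynomials, neither identically zero, let 0 < α₁ < α₂, and let d be a nonnegative integer. Then ∫_ℝ ∫_ℝ |P₁(λ)| |P₂(t)| e^{-α₁ λ²} e^{-t²/(4α₂)} e^{|λ||t|} / (1+|t|+|λ|)^d dt dλ = ∞. -/

import Mathlib

/-!
Completing the square, `-t²/(4α₂) + |l||t| = α₂l² - (t - 2α₂l)²/(4α₂)` for `l, t ≥ 0`, so on the
window `t ∈ [2α₂l, 2α₂l + 1]` the integrand is at least a constant times
`e^{(α₂ - α₁)l²} / (2 + (2α₂ + 1)l)^d`, the polynomials being bounded below at infinity. Hence the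
inner integral tends to infinity with `l`, and so the outer integral diverges.
-/

open MeasureTheory Filter Set Real
open scoped ENNReal

theorem Polynomial.exists_pos_eventually_le_norm_eval {𝕜 : Type*} [RCLike 𝕜] {P : Polynomial 𝕜}
    (hP : P ≠ 0) : ∃ c > 0, ∀ᶠ x : ℝ in atTop, c ≤ ‖P.eval (x : 𝕜)‖ := by
  rcases lt_or_ge 0 P.degree with hdeg | hdeg
  · have hx : Tendsto (fun x : ℝ => ‖(x : 𝕜)‖) atTop atTop := by
      simpa only [RCLike.norm_ofReal] using tendsto_abs_atTop_atTop
    exact ⟨1, one_pos, (P.tendsto_norm_atTop hdeg hx).eventually_ge_atTop 1⟩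
  · rw [Polynomial.eq_C_of_degree_le_zero hdeg] at hP ⊢
    refine ⟨‖P.coeff 0‖, by simpa using hP, Eventually.of_forall fun x => ?_⟩
    simp

theorem tendsto_exp_mul_sq_div_pow_atTop {ε a b : ℝ} (hε : 0 < ε) (ha : 0 ≤ a) (hb : 0 < b)
    (d : ℕ) : Tendsto (fun x => exp (ε * x ^ 2) / (a + b * x) ^ d) atTop atTop := by
  have hlin : Tendsto (fun x => ((a + b) ^ d)⁻¹ * (exp (ε * x) / x ^ d)) atTop atTop := by
    refine Tendsto.const_mul_atTop (by positivity) ?_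
    simpa only [rpow_natCast] using tendsto_exp_mul_div_rpow_atTop d ε hε
  refine tendsto_atTop_mono' _ ?_ hlin
  filter_upwards [eventually_ge_atTop 1] with x hx
  rw [← div_eq_inv_mul, div_div, ← mul_pow]
  gcongr
  · nlinarith
  · nlinarith

theorem ENNReal.ofReal_le_lintegral_of_le_on_Icc {f : ℝ → ℝ} {c x : ℝ}
    (h : ∀ t ∈ Icc x (x + 1), c ≤ f t) : ENNReal.ofReal c ≤ ∫⁻ t, ENNReal.ofReal (f t) :=
  calc ENNReal.ofReal c = ∫⁻ _ in Icc x (x + 1), ENNReal.ofReal c := by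
        simp [Real.volume_Icc]
    _ ≤ ∫⁻ t in Icc x (x + 1), ENNReal.ofReal (f t) :=
        setLIntegral_mono' measurableSet_Icc fun t ht => ENNReal.ofReal_le_ofReal (h t ht)
    _ ≤ ∫⁻ t, ENNReal.ofReal (f t) := setLIntegral_le_lintegral _ _

theorem lintegral_eq_top_of_eventually_ge {f : ℝ → ℝ≥0∞} {c : ℝ≥0∞} (hc : c ≠ 0)
    (hf : ∀ᶠ x in atTop, c ≤ f x) : ∫⁻ x, f x = ⊤ := by
  obtain ⟨M, hM⟩ := eventually_atTop.1 hf
  refine eq_top_iff.2 ?_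
  calc ⊤ = ∫⁻ _ in Ici M, c := by simp [hc]
    _ ≤ ∫⁻ x in Ici M, f x := setLIntegral_mono' measurableSet_Ici hM
    _ ≤ ∫⁻ x, f x := setLIntegral_le_lintegral _ _

theorem le_gaussian_integrand_of_mem_Icc {α₁ α₂ c₁ c₂ a b l t : ℝ} (hα₂ : 0 < α₂) (hl : 0 ≤ l)
    (hc₁ : 0 ≤ c₁) (hc₂ : 0 ≤ c₂) (ha : c₁ ≤ a) (hb : c₂ ≤ b)
    (ht : t ∈ Icc (2 * α₂ * l) (2 * α₂ * l + 1)) (d : ℕ) :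
    c₁ * c₂ * exp (-1 / (4 * α₂)) * (exp ((α₂ - α₁) * l ^ 2) / (2 + (2 * α₂ + 1) * l) ^ d) ≤
      a * b * exp (-α₁ * l ^ 2) * exp (-t ^ 2 / (4 * α₂)) * exp (|l| * |t|) /
        (1 + |t| + |l|) ^ d := by
  obtain ⟨ht₁, ht₂⟩ := ht
  have ht : 0 ≤ t := le_trans (by positivity) ht₁
  rw [abs_of_nonneg hl, abs_of_nonneg ht]
  have hexp : exp (-1 / (4 * α₂)) * exp ((α₂ - α₁) * l ^ 2) ≤
      exp (-α₁ * l ^ 2) * exp (-t ^ 2 / (4 * α₂)) * exp (l * t) := by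
    simp only [← exp_add, exp_le_exp]
    have hsquare : -α₁ * l ^ 2 + -t ^ 2 / (4 * α₂) + l * t - (-1 / (4 * α₂) + (α₂ - α₁) * l ^ 2)
        = (1 - (t - 2 * α₂ * l) ^ 2) / (4 * α₂) := by
      field_simp
      ring
    have : 0 ≤ (1 - (t - 2 * α₂ * l) ^ 2) / (4 * α₂) :=
      div_nonneg (by nlinarith) (by positivity)
    linarith
  have ha0 : 0 ≤ a := hc₁.trans ha
  have hb0 : 0 ≤ b := hc₂.trans hb
  calc c₁ * c₂ * exp (-1 / (4 * α₂)) * (exp ((α₂ - α₁) * l ^ 2) / (2 + (2 * α₂ + 1) * l) ^ d)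
      = c₁ * c₂ * (exp (-1 / (4 * α₂)) * exp ((α₂ - α₁) * l ^ 2)) /
          (2 + (2 * α₂ + 1) * l) ^ d := by ring
    _ ≤ a * b * (exp (-α₁ * l ^ 2) * exp (-t ^ 2 / (4 * α₂)) * exp (l * t)) /
          (1 + t + l) ^ d :=
        div_le_div₀ (by positivity) (by gcongr) (by positivity)
          (pow_le_pow_left₀ (by positivity) (by linarith) d)
    _ = _ := by ring

/-- **Divergence forcing a common Gaussian parameter** (Step 6 of the main proof).
For nonzero polynomials `P₁, P₂`, `0 < α₁ < α₂` and a nonnegative integer `d`,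
`∫∫ |P₁(λ)| |P₂(t)| e^{-α₁λ²} e^{-t²/(4α₂)} e^{|λ||t|}/(1+|t|+|λ|)^d dt dλ = ∞`. -/
theorem divergence_common_gaussian (P₁ P₂ : Polynomial ℂ) (hP₁ : P₁ ≠ 0) (hP₂ : P₂ ≠ 0)
    (α₁ α₂ : ℝ) (hα₁ : 0 < α₁) (hα : α₁ < α₂) (d : ℕ) :
    (∫⁻ l : ℝ, ∫⁻ t : ℝ,
      ENNReal.ofReal (‖P₁.eval (l : ℂ)‖ * ‖P₂.eval (t : ℂ)‖ *
        Real.exp (-α₁ * l ^ 2) * Real.exp (-t ^ 2 / (4 * α₂)) *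
        Real.exp (|l| * |t|) / (1 + |t| + |l|) ^ d)) = ⊤ := by
  obtain ⟨c₁, hc₁, hP₁⟩ := Polynomial.exists_pos_eventually_le_norm_eval hP₁
  obtain ⟨c₂, hc₂, hP₂⟩ := Polynomial.exists_pos_eventually_le_norm_eval hP₂
  have hα₂ : 0 < α₂ := hα₁.trans hα
  have hlower := (tendsto_exp_mul_sq_div_pow_atTop (sub_pos.2 hα) zero_le_two
    (by positivity : 0 < 2 * α₂ + 1) d).const_mul_atTop
    (by positivity : 0 < c₁ * c₂ * exp (-1 / (4 * α₂)))
  have hP₂_window : ∀ᶠ l in atTop, ∀ t, 2 * α₂ * l ≤ t → c₂ ≤ ‖P₂.eval (t : ℂ)‖ :=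
    (tendsto_id.const_mul_atTop (by positivity)).eventually (eventually_forall_ge_atTop.2 hP₂)
  refine lintegral_eq_top_of_eventually_ge one_ne_zero ?_
  filter_upwards [hlower.eventually_ge_atTop 1, hP₁, hP₂_window, eventually_ge_atTop 0]
    with l hl₁ hlP₁ hlP₂ hl
  refine (ENNReal.one_le_ofReal.2 hl₁).trans (ENNReal.ofReal_le_lintegral_of_le_on_Icc (x := 2 * α₂ * l) fun t ht => ?_)
  exact le_gaussian_integrand_of_mem_Icc hα₂ hl hc₁.le hc₂.le hlP₁ (hlP₂ t ht.1) ht d
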